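/- arXiv:1602.08620 — 3 statements merged into one kernel-verified Lean document; each statement's English description precedes it below -/
import Mathlib

section
/- For integers 2 ≤ k ≤ c ≤ n/k with c dividing n, the ratio h/b := [c·binom(n/c, k)] / [(n/c)^k · binom(c, k)] satisfies h/b ≤ 1/(k−1)! ≤ 1. -/
open Nat

theorem Nat.le_mul_choose {c k : ℕ} (hk : 1 ≤ k) (hkc : k ≤ c) : c ≤ k * c.choose k := by
  obtain ⟨j, rfl⟩ : ∃ j, k = j + 1 := ⟨k - 1, by omega⟩
  obtain ⟨d, rfl⟩ : ∃ d, c = d + 1 := ⟨c - 1, by omega⟩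
  calc d + 1 ≤ (d + 1) * d.choose j := Nat.le_mul_of_pos_right _ (choose_pos (by omega))
    _ = (j + 1) * (d + 1).choose (j + 1) := by rw [add_one_mul_choose_eq, Nat.mul_comm]

theorem Nat.factorial_mul_choose_le_pow (m k : ℕ) : k ! * m.choose k ≤ m ^ k :=
  descFactorial_eq_factorial_mul_choose m k ▸ descFactorial_le_pow m k

theorem Nat.mul_choose_mul_factorial_le {c k : ℕ} (hk : 1 ≤ k) (hkc : k ≤ c) (m : ℕ) :
    c * m.choose k * (k - 1)! ≤ m ^ k * c.choose k :=
  calc c * m.choose k * (k - 1)! ≤ k * c.choose k * m.choose k * (k - 1)! := by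
        gcongr; exact le_mul_choose hk hkc
    _ = c.choose k * ((k * (k - 1)!) * m.choose k) := by ring
    _ ≤ m ^ k * c.choose k := by
        rw [mul_factorial_pred (by omega), Nat.mul_comm (m ^ k)]
        gcongr
        exact factorial_mul_choose_le_pow m k

theorem mul_choose_div_pow_mul_choose_le {c k : ℕ} (hk : 1 ≤ k) (hkc : k ≤ c) (m : ℕ) :
    (c : ℝ) * m.choose k / ((m : ℝ) ^ k * c.choose k) ≤ 1 / (k - 1)! := by
  -- `div_le_of_le_mul₀` also covers `m = 0`, where the quotient is `x / 0 = 0`.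
  refine div_le_of_le_mul₀ (by positivity) (by positivity) ?_
  rw [one_div_mul_eq_div, le_div_iff₀ (by positivity)]
  exact_mod_cast mul_choose_mul_factorial_le hk hkc m

theorem stmt_2_general (n c k : ℕ) (hk : 2 ≤ k) (hkc : k ≤ c) :
    ((c : ℝ) * ((n / c).choose k)) / (((n / c : ℕ) : ℝ) ^ k * (c.choose k)) ≤
        1 / ((k - 1).factorial : ℝ) ∧
      (1 : ℝ) / ((k - 1).factorial : ℝ) ≤ 1 :=
  ⟨mul_choose_div_pow_mul_choose_le (by omega) hkc (n / c),
    div_le_one_of_le₀ (by exact_mod_cast (k - 1).factorial_pos) (by positivity)⟩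

/-- For integers `2 ≤ k ≤ c ≤ n/k` with `c ∣ n`, the ratio
`h/b = [c·C(n/c,k)] / [(n/c)^k·C(c,k)]` is at most `1/(k-1)!`, which is at most `1`. -/
theorem stmt_2 (n c k : ℕ) (hk : 2 ≤ k) (hkc : k ≤ c) (hcn : k * c ≤ n) (hdvd : c ∣ n) :
    ((c : ℝ) * ((n / c).choose k)) / (((n / c : ℕ) : ℝ) ^ k * (c.choose k)) ≤
        1 / ((k - 1).factorial : ℝ) ∧
      (1 : ℝ) / ((k - 1).factorial : ℝ) ≤ 1 :=
  stmt_2_general n c k hk hkc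
end

section
/- If a restriction ρ of size t, chosen uniformly at random (t variables chosen uniformly, each assigned a uniformly random Boolean value), is applied to a set of S clauses each mentioning more than β·n distinct variables out of n variables, then the probability that some clause is not satisfied by ρ is at most 2^{1 − βt/4}·S, provided appropriate conditions on t, β, n (in particular t ≤ n). -/
open scoped Classical

open Finset Real in
lemma two_rpow_le_one_add {x : ℝ} (h0 : 0 ≤ x) (h1 : x ≤ 1) : (2:ℝ) ^ x ≤ 1 + x := by
  have h := convexOn_exp.2 (x := (0:ℝ)) (y := Real.log 2) (Set.mem_univ 0) (Set.mem_univ (Real.log 2))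
    (show (0:ℝ) ≤ 1 - x by linarith) h0 (by ring)
  have h2 : Real.exp (Real.log 2) = 2 := Real.exp_log (by norm_num)
  rw [Real.rpow_def_of_pos (by norm_num)]
  simp only [smul_eq_mul, mul_zero, zero_add, Real.exp_zero, h2] at h
  calc Real.exp (Real.log 2 * x) = Real.exp (x * Real.log 2) := by ring_nf
    _ ≤ (1-x) * 1 + x * 2 := h
    _ = 1 + x := by ring

open Finset Real in
lemma key_ineq (n k t : ℝ) (h1k : 1 ≤ k) (hkn : k ≤ n) (h1t : 1 ≤ t) (htn : t ≤ n) :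
    t/n * (1/2) * (2:ℝ)^(-((k-1)*(t-1)/(4*(n-1)))) + (n-t)/n * (2:ℝ)^(-((k-1)*t/(4*(n-1))))
      ≤ (2:ℝ)^(-(k*t/(4*n))) := by
  have hn0 : (0:ℝ) < n := by linarith
  rcases eq_or_lt_of_le (show (1:ℝ) ≤ n by linarith) with h1 | h1
  · -- n = 1, so k = t = 1
    have hk1 : k = 1 := le_antisymm (by linarith) h1k
    have ht1 : t = 1 := le_antisymm (by linarith) h1t
    rw [← h1, hk1, ht1]
    norm_num
    calc (1:ℝ)/2 = (2:ℝ)^(-1 : ℝ) := by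
          rw [Real.rpow_neg_one]; norm_num
      _ ≤ (2:ℝ)^(-(1/4) : ℝ) := by
          apply Real.rpow_le_rpow_left_iff (x := 2) (by norm_num) |>.2; norm_num
  · have hn1 : (0:ℝ) < n - 1 := by linarith
    set u : ℝ := (n*(k+t-1) - k*t)/(4*n*(n-1)) with hu
    set v : ℝ := t*(n-k)/(4*n*(n-1)) with hv
    have eq1 : -((k-1)*(t-1)/(4*(n-1))) = -(k*t/(4*n)) + u := by
      field_simp [hu]; rw [hu]; field_simp [hn1.ne']; ring
    have eq2 : -((k-1)*t/(4*(n-1))) = -(k*t/(4*n)) + v := by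
      field_simp [hv]; rw [hv]; field_simp [hn1.ne']; ring
    have hu0 : 0 ≤ u := by
      apply div_nonneg _ (by positivity)
      nlinarith
    have hu4 : u ≤ 1/4 := by
      rw [hu, div_le_iff₀ (by positivity)]
      nlinarith [mul_nonneg (sub_nonneg.2 hkn) (sub_nonneg.2 htn)]
    have hv0 : 0 ≤ v := by
      apply div_nonneg _ (by positivity)
      nlinarith
    have hva : v ≤ t/n * (1/4) := by
      rw [hv, div_le_iff₀ (by positivity)]
      have he : t/n * (1/4) * (4*n*(n-1)) = t*(n-1) := by field_simp
      rw [he]; nlinarith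
    have Au : (2:ℝ)^u ≤ 1 + u := two_rpow_le_one_add hu0 (by linarith)
    have Av : (2:ℝ)^v ≤ 1 + v := two_rpow_le_one_add hv0 (by nlinarith [div_le_one_of_le₀ htn hn0.le])
    rw [eq1, eq2, Real.rpow_add (by norm_num), Real.rpow_add (by norm_num)]
    set T : ℝ := (2:ℝ)^(-(k*t/(4*n))) with hT
    have hT0 : 0 < T := Real.rpow_pos_of_pos (by norm_num) _
    have hnt : (n-t)/n = 1 - t/n := by field_simp
    have ha1 : t/n ≤ 1 := div_le_one_of_le₀ htn hn0.le
    have ha0 : 0 < t/n := by positivity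
    calc t/n * (1/2) * (T * 2^u) + (n-t)/n * (T * 2^v)
        = T * (t/n * (1/2) * 2^u + (1 - t/n) * 2^v) := by rw [hnt]; ring
      _ ≤ T * 1 := by
          apply mul_le_mul_of_nonneg_left _ hT0.le
          have h2v0 : (0:ℝ) ≤ 2^v := (Real.rpow_pos_of_pos (by norm_num) v).le
          nlinarith [mul_le_mul_of_nonneg_left Av (show (0:ℝ) ≤ 1 - t/n by linarith),
            mul_le_mul_of_nonneg_left Au (show (0:ℝ) ≤ t/n * (1/2) by positivity)]
      _ = T := mul_one T

open Finset Real in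
lemma keyG {α : Type*} [DecidableEq α] :
    ∀ (m : ℕ) (S V : Finset α), V ⊆ S → S.card = m → ∀ t, t ≤ m →
    ∑ A ∈ S.powersetCard t, ((2:ℝ)⁻¹) ^ (A ∩ V).card
      ≤ (m.choose t : ℝ) * (2:ℝ) ^ (-((V.card * t : ℝ)/(4*m))) := by
  intro m
  induction m with
  | zero =>
    intro S V hVS hS t ht
    interval_cases t
    simp [Finset.powersetCard_zero]
  | succ m ih =>
    intro S V hVS hS t ht
    have IH' : ∀ (S' V' : Finset α), V' ⊆ S' → S'.card = m → ∀ τ,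
        (∑ A ∈ S'.powersetCard τ, ((2:ℝ)⁻¹) ^ (A ∩ V').card)
          ≤ (m.choose τ : ℝ) * (2:ℝ) ^ (-((V'.card * τ : ℝ)/(4*m))) := by
      intro S' V' h1 h2 τ
      rcases le_or_gt τ m with h | h
      · exact ih S' V' h1 h2 τ h
      · rw [Finset.powersetCard_eq_empty.2 (by omega)]
        simp [Nat.choose_eq_zero_of_lt h]
    by_cases ht0 : t = 0
    · subst ht0
      simp [Finset.powersetCard_zero]
    by_cases hV : V = ∅
    · subst hV
      simp only [Finset.inter_empty, Finset.card_empty, pow_zero, Finset.sum_const,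
        nsmul_eq_mul, mul_one, Finset.card_powersetCard, hS, Finset.card_empty,
        Nat.cast_zero, zero_mul, zero_div, neg_zero, Real.rpow_zero]
      exact le_refl _
    obtain ⟨v, hvV⟩ := Finset.nonempty_iff_ne_empty.2 hV
    have hvS : v ∈ S := hVS hvV
    obtain ⟨t', rfl⟩ : ∃ t', t = t' + 1 :=
      ⟨t - 1, (Nat.succ_pred_eq_of_pos (Nat.pos_of_ne_zero ht0)).symm⟩
    set S' := S.erase v with hS'def
    set V' := V.erase v with hV'def
    have hS'card : S'.card = m := by rw [hS'def, Finset.card_erase_of_mem hvS, hS]; omega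
    have hV'S' : V' ⊆ S' := Finset.erase_subset_erase _ hVS
    have hvS' : v ∉ S' := Finset.notMem_erase v S
    have hSin : S = insert v S' := (Finset.insert_erase hvS).symm
    have hsplit : S.powersetCard (t' + 1)
        = S'.powersetCard (t' + 1) ∪ (S'.powersetCard t').image (insert v) := by
      conv_lhs => rw [hSin]
      exact Finset.powersetCard_succ_insert hvS' t'
    have hdisj : Disjoint (S'.powersetCard (t' + 1)) ((S'.powersetCard t').image (insert v)) := by
      rw [Finset.disjoint_left]
      intro A hA hA'
      obtain ⟨hAsub, -⟩ := Finset.mem_powersetCard.1 hA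
      obtain ⟨B, -, rfl⟩ := Finset.mem_image.1 hA'
      exact hvS' (hAsub (Finset.mem_insert_self v B))
    have hterm1 : ∀ A ∈ S'.powersetCard (t' + 1),
        ((2:ℝ)⁻¹) ^ (A ∩ V).card = ((2:ℝ)⁻¹) ^ (A ∩ V').card := by
      intro A hA
      obtain ⟨hAsub, -⟩ := Finset.mem_powersetCard.1 hA
      have hvA : v ∉ A := fun h => hvS' (hAsub h)
      rw [hV'def, Finset.inter_erase, Finset.erase_eq_of_notMem (by simp [hvA])]
    have hterm2 : ∀ B ∈ S'.powersetCard t',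
        ((2:ℝ)⁻¹) ^ ((insert v B) ∩ V).card = (2:ℝ)⁻¹ * ((2:ℝ)⁻¹) ^ (B ∩ V').card := by
      intro B hB
      obtain ⟨hBsub, -⟩ := Finset.mem_powersetCard.1 hB
      have hvB : v ∉ B := fun h => hvS' (hBsub h)
      have h1 : insert v B ∩ V = insert v (B ∩ V') := by
        rw [Finset.insert_inter_of_mem hvV, hV'def, Finset.inter_erase,
          Finset.erase_eq_of_notMem (by simp [hvB])]
      rw [h1, Finset.card_insert_of_notMem (by simp [hvB]), pow_succ]
      ring
    have hinj : ∀ x ∈ S'.powersetCard t', ∀ y ∈ S'.powersetCard t',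
        insert v x = insert v y → x = y := by
      intro x hx y hy hxy
      obtain ⟨hxs, -⟩ := Finset.mem_powersetCard.1 hx
      obtain ⟨hys, -⟩ := Finset.mem_powersetCard.1 hy
      have hvx : v ∉ x := fun h => hvS' (hxs h)
      have hvy : v ∉ y := fun h => hvS' (hys h)
      rw [← Finset.erase_insert hvx, ← Finset.erase_insert hvy, hxy]
    rw [hsplit, Finset.sum_union hdisj, Finset.sum_image hinj,
      Finset.sum_congr rfl hterm1, Finset.sum_congr rfl hterm2, ← Finset.mul_sum]
    -- now bound the two sums
    have hb1 := IH' S' V' hV'S' hS'card (t' + 1)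
    have hb2 := IH' S' V' hV'S' hS'card t'
    -- cast facts
    have hK1 : 1 ≤ V.card := Finset.card_pos.2 ⟨v, hvV⟩
    have hKn : V.card ≤ m + 1 := hS ▸ Finset.card_le_card hVS
    have castV : ((V').card : ℝ) = (V.card : ℝ) - 1 := by
      rw [hV'def, Finset.card_erase_of_mem hvV, Nat.cast_sub hK1, Nat.cast_one]
    rw [castV] at hb1 hb2
    set K : ℝ := (V.card : ℝ) with hK
    have hkey := key_ineq ((m:ℝ)+1) K ((t':ℝ)+1)
      (by rw [hK]; exact_mod_cast hK1)
      (by rw [hK]; exact_mod_cast hKn)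
      (by linarith [Nat.cast_nonneg (α := ℝ) t'])
      (by exact_mod_cast ht)
    have hsimp : ((m:ℝ)+1) - 1 = (m:ℝ) := by ring
    have hsimp2 : ((t':ℝ)+1) - 1 = (t':ℝ) := by ring
    rw [hsimp, hsimp2] at hkey
    set C : ℝ := ((m+1).choose (t'+1) : ℝ) with hC
    have hC0 : (0:ℝ) ≤ C := by positivity
    have e1 : ((m:ℝ)+1) * (m.choose t' : ℝ) = C * ((t':ℝ)+1) := by
      rw [hC]; exact_mod_cast Nat.add_one_mul_choose_eq m t'
    have e2 : C = (m.choose t' : ℝ) + (m.choose (t'+1) : ℝ) := by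
      rw [hC]; exact_mod_cast Nat.choose_succ_succ m t'
    have hm1 : (0:ℝ) < (m:ℝ) + 1 := by positivity
    have c1 : ((t':ℝ)+1)/((m:ℝ)+1) * C = (m.choose t' : ℝ) := by
      field_simp
      linarith [e1]
    have c2 : (((m:ℝ)+1) - ((t':ℝ)+1))/((m:ℝ)+1) * C = (m.choose (t'+1) : ℝ) := by
      field_simp
      nlinarith [e1, e2]
    have hmul := mul_le_mul_of_nonneg_left hkey hC0
    rw [show ((m+1:ℕ):ℝ) = (m:ℝ)+1 by push_cast; ring,
       show ((t'+1:ℕ):ℝ) = (t':ℝ)+1 by push_cast; ring]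
    calc (∑ A ∈ S'.powersetCard (t'+1), ((2:ℝ)⁻¹) ^ (A ∩ V').card)
          + (2:ℝ)⁻¹ * ∑ B ∈ S'.powersetCard t', ((2:ℝ)⁻¹) ^ (B ∩ V').card
        ≤ (m.choose (t'+1) : ℝ) * (2:ℝ) ^ (-((K - 1) * ((t'+1):ℕ) / (4*(m:ℝ))))
          + (2:ℝ)⁻¹ * ((m.choose t' : ℝ) * (2:ℝ) ^ (-((K - 1) * (t' : ℕ) / (4*(m:ℝ))))) := by
          exact add_le_add hb1 (mul_le_mul_of_nonneg_left hb2 (by norm_num))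
      _ = C * (((t':ℝ)+1)/((m:ℝ)+1) * (1/2) * (2:ℝ)^(-((K-1)*(t':ℝ)/(4*(m:ℝ))))
            + (((m:ℝ)+1) - ((t':ℝ)+1))/((m:ℝ)+1) * (2:ℝ)^(-((K-1)*((t':ℝ)+1)/(4*(m:ℝ))))) := by
          push_cast
          linear_combination ((2:ℝ)^(-((K-1)*((t':ℝ)+1)/(4*(m:ℝ))))) * c2.symm
            + ((1:ℝ)/2 * (2:ℝ)^(-((K-1)*(t':ℝ)/(4*(m:ℝ))))) * c1.symm
      _ ≤ C * (2:ℝ)^(-(K*((t':ℝ)+1)/(4*((m:ℝ)+1)))) := hmul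

open Finset Real in
lemma countf (n : ℕ) (A : Finset (Fin n)) (C : Finset (Fin n × Bool)) :
    ((Finset.univ : Finset (Fin n → Bool)).filter
        (fun f => ∀ ℓ ∈ C, ¬(ℓ.1 ∈ A ∧ f ℓ.1 = ℓ.2))).card
      ≤ 2 ^ (n - (A ∩ C.image Prod.fst).card) := by
  classical
  set W := A ∩ C.image Prod.fst with hW
  have hcard : Fintype.card ({x // x ∈ Wᶜ} → Bool) = 2 ^ (n - W.card) := by
    rw [Fintype.card_fun, Fintype.card_bool, Fintype.card_coe, Finset.card_compl,
      Fintype.card_fin]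
  calc ((Finset.univ : Finset (Fin n → Bool)).filter
        (fun f => ∀ ℓ ∈ C, ¬(ℓ.1 ∈ A ∧ f ℓ.1 = ℓ.2))).card
      ≤ (Finset.univ : Finset ({x // x ∈ Wᶜ} → Bool)).card := by
        apply Finset.card_le_card_of_injOn (fun f => (fun x => f x.1))
          (fun f _ => Finset.mem_univ _)
        intro f hf g hg hfg
        simp only [Finset.coe_filter, Set.mem_setOf_eq, Finset.mem_univ, true_and] at hf hg
        funext x
        by_cases hx : x ∈ Wᶜ
        · exact congrFun hfg ⟨x, hx⟩
        · have hxW : x ∈ W := by simpa using hx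
          have hxA : x ∈ A := (Finset.mem_inter.1 hxW).1
          have hxV : x ∈ C.image Prod.fst := (Finset.mem_inter.1 hxW).2
          obtain ⟨ℓ, hℓC, hℓ1⟩ := Finset.mem_image.1 hxV
          have h1 : ¬(ℓ.1 ∈ A ∧ f ℓ.1 = ℓ.2) := hf ℓ hℓC
          have h2 : ¬(ℓ.1 ∈ A ∧ g ℓ.1 = ℓ.2) := hg ℓ hℓC
          rw [hℓ1] at h1 h2
          have hf' : f x ≠ ℓ.2 := fun h => h1 ⟨hxA, h⟩
          have hg' : g x ≠ ℓ.2 := fun h => h2 ⟨hxA, h⟩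
          revert hf' hg'
          cases f x <;> cases g x <;> cases ℓ.2 <;> simp
    _ = 2 ^ (n - W.card) := by rw [Finset.card_univ, hcard]

open Finset Real in
lemma two_pow_sub (n m : ℕ) (h : m ≤ n) : (2:ℝ) ^ (n - m) = (2:ℝ)^n * ((2:ℝ)⁻¹)^m := by
  have e : (2:ℝ)^(n-m) * 2^m = 2^n := by
    rw [← pow_add]; congr 1; omega
  have h2m : (0:ℝ) < 2^m := by positivity
  rw [inv_pow]
  field_simp
  linarith [e]

lemma per_clause (n t : ℕ) (ht : t ≤ n) (C : Finset (Fin n × Bool)) :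
    ((((Finset.powersetCard t (Finset.univ : Finset (Fin n))) ×ˢ
          (Finset.univ : Finset (Fin n → Bool))).filter
        (fun ρ => ∀ ℓ ∈ C, ¬(ℓ.1 ∈ ρ.1 ∧ ρ.2 ℓ.1 = ℓ.2))).card : ℝ)
      ≤ (n.choose t : ℝ) * 2 ^ n *
        (2:ℝ) ^ (-(((C.image Prod.fst).card * t : ℝ)/(4*n))) := by
  classical
  set V := C.image Prod.fst with hV
  have hsub : (((Finset.powersetCard t (Finset.univ : Finset (Fin n))) ×ˢ
          (Finset.univ : Finset (Fin n → Bool))).filter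
        (fun ρ => ∀ ℓ ∈ C, ¬(ℓ.1 ∈ ρ.1 ∧ ρ.2 ℓ.1 = ℓ.2)))
      ⊆ (Finset.powersetCard t (Finset.univ : Finset (Fin n))).biUnion
          (fun A => {A} ×ˢ ((Finset.univ : Finset (Fin n → Bool)).filter
            (fun f => ∀ ℓ ∈ C, ¬(ℓ.1 ∈ A ∧ f ℓ.1 = ℓ.2)))) := by
    intro ρ hρ
    rw [Finset.mem_filter, Finset.mem_product] at hρ
    obtain ⟨⟨h1, -⟩, h3⟩ := hρ
    rw [Finset.mem_biUnion]
    exact ⟨ρ.1, h1, by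
      rw [Finset.mem_product, Finset.mem_singleton]
      exact ⟨rfl, Finset.mem_filter.2 ⟨Finset.mem_univ _, h3⟩⟩⟩
  have h1 : (((Finset.powersetCard t (Finset.univ : Finset (Fin n))) ×ˢ
          (Finset.univ : Finset (Fin n → Bool))).filter
        (fun ρ => ∀ ℓ ∈ C, ¬(ℓ.1 ∈ ρ.1 ∧ ρ.2 ℓ.1 = ℓ.2))).card
      ≤ ∑ A ∈ Finset.powersetCard t (Finset.univ : Finset (Fin n)),
          ((Finset.univ : Finset (Fin n → Bool)).filter
            (fun f => ∀ ℓ ∈ C, ¬(ℓ.1 ∈ A ∧ f ℓ.1 = ℓ.2))).card := by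
    refine le_trans (Finset.card_le_card hsub) (le_trans Finset.card_biUnion_le ?_)
    refine Finset.sum_le_sum fun A _ => ?_
    rw [Finset.card_product, Finset.card_singleton, one_mul]
  have h2 : ∀ A : Finset (Fin n), ((2:ℝ)) ^ (n - (A ∩ V).card)
      = (2:ℝ) ^ n * ((2:ℝ)⁻¹) ^ (A ∩ V).card := by
    intro A
    have hle : (A ∩ V).card ≤ n := by
      calc (A ∩ V).card ≤ Fintype.card (Fin n) := Finset.card_le_univ _
        _ = n := Fintype.card_fin n
    exact two_pow_sub n _ hle
  have hG := keyG n (Finset.univ : Finset (Fin n)) V (Finset.subset_univ V)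
    (by rw [Finset.card_univ, Fintype.card_fin]) t ht
  calc ((((Finset.powersetCard t (Finset.univ : Finset (Fin n))) ×ˢ
          (Finset.univ : Finset (Fin n → Bool))).filter
        (fun ρ => ∀ ℓ ∈ C, ¬(ℓ.1 ∈ ρ.1 ∧ ρ.2 ℓ.1 = ℓ.2))).card : ℝ)
      ≤ ∑ A ∈ Finset.powersetCard t (Finset.univ : Finset (Fin n)),
          (((Finset.univ : Finset (Fin n → Bool)).filter
            (fun f => ∀ ℓ ∈ C, ¬(ℓ.1 ∈ A ∧ f ℓ.1 = ℓ.2))).card : ℝ) := by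
        exact_mod_cast h1
    _ ≤ ∑ A ∈ Finset.powersetCard t (Finset.univ : Finset (Fin n)),
          ((2:ℝ)) ^ (n - (A ∩ V).card) := by
        refine Finset.sum_le_sum fun A _ => ?_
        exact_mod_cast countf n A C
    _ = (2:ℝ) ^ n * ∑ A ∈ Finset.powersetCard t (Finset.univ : Finset (Fin n)),
          ((2:ℝ)⁻¹) ^ (A ∩ V).card := by
        rw [Finset.mul_sum]
        exact Finset.sum_congr rfl fun A _ => h2 A
    _ ≤ (2:ℝ) ^ n * ((n.choose t : ℝ) * (2:ℝ) ^ (-((V.card * t : ℝ)/(4*n)))) := by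
        exact mul_le_mul_of_nonneg_left hG (by positivity)
    _ = (n.choose t : ℝ) * 2 ^ n * (2:ℝ) ^ (-((V.card * t : ℝ)/(4*n))) := by ring

/-- A uniformly random restriction of size `t` (a uniformly random set of `t` of the
`n` variables, each assigned a uniformly random Boolean value) fails to satisfy some
clause in a collection `Cs` of clauses, each mentioning more than `β·n` distinct
variables, with probability at most `2^(1 − β·t/4)·|Cs|` (for `t ≤ n`, `β > 0`). -/
theorem stmt_12 (n t : ℕ) (β : ℝ) (hβ : 0 < β) (ht : t ≤ n)
    (Cs : Finset (Finset (Fin n × Bool)))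
    (hlarge : ∀ C ∈ Cs, β * n < ((C.image Prod.fst).card : ℝ)) :
    ((((Finset.powersetCard t (Finset.univ : Finset (Fin n))) ×ˢ
          (Finset.univ : Finset (Fin n → Bool))).filter
        (fun ρ => ∃ C ∈ Cs, ∀ ℓ ∈ C, ¬(ℓ.1 ∈ ρ.1 ∧ ρ.2 ℓ.1 = ℓ.2))).card : ℝ) /
        ((n.choose t : ℝ) * 2 ^ n) ≤
      (2 : ℝ) ^ ((1 : ℝ) - β * t / 4) * (Cs.card : ℝ) := by
  have hchoose : 0 < n.choose t := Nat.choose_pos ht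
  have hN : (0:ℝ) < (n.choose t : ℝ) * 2 ^ n := by positivity
  rw [div_le_iff₀ hN]
  -- handle the degenerate case n = 0
  by_cases hn : n = 0
  · subst hn
    have hCs : Cs = ∅ := by
      rw [Finset.eq_empty_iff_forall_notMem]
      intro C hC
      have h1 := hlarge C hC
      have h2 : C = ∅ := Finset.eq_empty_of_isEmpty C
      rw [h2] at h1
      simp at h1
    subst hCs
    have : (Finset.filter
        (fun ρ : Finset (Fin 0) × (Fin 0 → Bool) =>
          ∃ C ∈ (∅ : Finset (Finset (Fin 0 × Bool))), ∀ ℓ ∈ C, ¬(ℓ.1 ∈ ρ.1 ∧ ρ.2 ℓ.1 = ℓ.2))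
        ((Finset.powersetCard t (Finset.univ : Finset (Fin 0))) ×ˢ
          (Finset.univ : Finset (Fin 0 → Bool)))) = ∅ := by
      apply Finset.filter_false_of_mem
      intro ρ _
      simp
    rw [this]
    simp only [Finset.card_empty, Nat.cast_zero, mul_zero]
    positivity
  have hn0 : (0:ℝ) < (n:ℝ) := by
    have : 0 < n := Nat.pos_of_ne_zero hn
    exact_mod_cast this
  -- union bound
  have hsub : (((Finset.powersetCard t (Finset.univ : Finset (Fin n))) ×ˢ
          (Finset.univ : Finset (Fin n → Bool))).filter
        (fun ρ => ∃ C ∈ Cs, ∀ ℓ ∈ C, ¬(ℓ.1 ∈ ρ.1 ∧ ρ.2 ℓ.1 = ℓ.2)))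
      ⊆ Cs.biUnion (fun C =>
          ((Finset.powersetCard t (Finset.univ : Finset (Fin n))) ×ˢ
            (Finset.univ : Finset (Fin n → Bool))).filter
          (fun ρ => ∀ ℓ ∈ C, ¬(ℓ.1 ∈ ρ.1 ∧ ρ.2 ℓ.1 = ℓ.2))) := by
    intro ρ hρ
    rw [Finset.mem_filter] at hρ
    obtain ⟨h1, C, hC, h2⟩ := hρ
    exact Finset.mem_biUnion.2 ⟨C, hC, Finset.mem_filter.2 ⟨h1, h2⟩⟩
  have hUB : (((Finset.powersetCard t (Finset.univ : Finset (Fin n))) ×ˢ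
          (Finset.univ : Finset (Fin n → Bool))).filter
        (fun ρ => ∃ C ∈ Cs, ∀ ℓ ∈ C, ¬(ℓ.1 ∈ ρ.1 ∧ ρ.2 ℓ.1 = ℓ.2))).card
      ≤ ∑ C ∈ Cs, (((Finset.powersetCard t (Finset.univ : Finset (Fin n))) ×ˢ
          (Finset.univ : Finset (Fin n → Bool))).filter
        (fun ρ => ∀ ℓ ∈ C, ¬(ℓ.1 ∈ ρ.1 ∧ ρ.2 ℓ.1 = ℓ.2))).card :=
    le_trans (Finset.card_le_card hsub) Finset.card_biUnion_le
  -- per-clause final bound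
  have hper : ∀ C ∈ Cs,
      ((((Finset.powersetCard t (Finset.univ : Finset (Fin n))) ×ˢ
          (Finset.univ : Finset (Fin n → Bool))).filter
        (fun ρ => ∀ ℓ ∈ C, ¬(ℓ.1 ∈ ρ.1 ∧ ρ.2 ℓ.1 = ℓ.2))).card : ℝ)
      ≤ (2 : ℝ) ^ ((1 : ℝ) - β * t / 4) * ((n.choose t : ℝ) * 2 ^ n) := by
    intro C hC
    refine le_trans (per_clause n t ht C) ?_
    have hexp : (-(((C.image Prod.fst).card * t : ℝ)/(4*n))) ≤ (1 : ℝ) - β * t / 4 := by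
      have hk := hlarge C hC
      have ht0 : (0:ℝ) ≤ (t:ℝ) := Nat.cast_nonneg t
      have h1 : β * t / 4 ≤ ((C.image Prod.fst).card * t : ℝ)/(4*n) := by
        rw [div_le_div_iff₀ (by norm_num) (by positivity)]
        nlinarith
      nlinarith [Real.rpow_natCast (2:ℝ) 0]
    calc (n.choose t : ℝ) * 2 ^ n *
          (2:ℝ) ^ (-(((C.image Prod.fst).card * t : ℝ)/(4*n)))
        ≤ (n.choose t : ℝ) * 2 ^ n * (2:ℝ) ^ ((1 : ℝ) - β * t / 4) := by
          apply mul_le_mul_of_nonneg_left _ (by positivity)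
          exact Real.rpow_le_rpow_of_exponent_le (by norm_num) hexp
      _ = (2 : ℝ) ^ ((1 : ℝ) - β * t / 4) * ((n.choose t : ℝ) * 2 ^ n) := by ring
  calc ((((Finset.powersetCard t (Finset.univ : Finset (Fin n))) ×ˢ
          (Finset.univ : Finset (Fin n → Bool))).filter
        (fun ρ => ∃ C ∈ Cs, ∀ ℓ ∈ C, ¬(ℓ.1 ∈ ρ.1 ∧ ρ.2 ℓ.1 = ℓ.2))).card : ℝ)
      ≤ ∑ C ∈ Cs, ((((Finset.powersetCard t (Finset.univ : Finset (Fin n))) ×ˢ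
          (Finset.univ : Finset (Fin n → Bool))).filter
        (fun ρ => ∀ ℓ ∈ C, ¬(ℓ.1 ∈ ρ.1 ∧ ρ.2 ℓ.1 = ℓ.2))).card : ℝ) := by
        exact_mod_cast hUB
    _ ≤ ∑ C ∈ Cs, (2 : ℝ) ^ ((1 : ℝ) - β * t / 4) * ((n.choose t : ℝ) * 2 ^ n) :=
        Finset.sum_le_sum hper
    _ = (2 : ℝ) ^ ((1 : ℝ) - β * t / 4) * (Cs.card : ℝ) * ((n.choose t : ℝ) * 2 ^ n) := by
        rw [Finset.sum_const, nsmul_eq_mul]; ring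
end

section
/- Let Q be the modularity metric. For every ε > 0, the constant function c(n) = ⌈1/ε⌉ witnesses that modularity is a polynomial clique metric: for all n ≥ 2 and any positive edge weights on K_n, the modularity of c(n) disjoint identical copies of the weighted K_n is at least 1 − ε. -/
/-!
Partition `K_n^c` into its `c` copies. Each copy carries the fraction `1/c` both of the
total edge weight and of the total degree, so this partition has modularity
`c (1/c - 1/c²) = 1 - 1/c`, and `1/⌈1/ε⌉ ≤ ε`.
-/

/-- Weight function of `c` disjoint identical copies of a weighted complete graph
`K_n` with edge weights `w`. -/
noncomputable def copiesW (n c : ℕ) (w : Fin n → Fin n → ℝ) (x y : Fin c × Fin n) : ℝ :=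
  if x.1 = y.1 then w x.2 y.2 else 0

/-- The modularity value of a vertex partition `δ` of `K_n^c` (with weights `w` on
each copy): `Σ_{C∈δ} [W(C)/W − (D(C)/D)²]`. -/
noncomputable def modQ (n c : ℕ) (w : Fin n → Fin n → ℝ)
    (δ : Finpartition (Finset.univ : Finset (Fin c × Fin n))) : ℝ :=
  ∑ C ∈ δ.parts,
    ((∑ x ∈ C, ∑ y ∈ C, copiesW n c w x y) /
        (∑ x : Fin c × Fin n, ∑ y : Fin c × Fin n, copiesW n c w x y) -
      ((∑ x ∈ C, ∑ y : Fin c × Fin n, copiesW n c w x y) /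
          (∑ x : Fin c × Fin n, ∑ y : Fin c × Fin n, copiesW n c w x y)) ^ 2)

open Finset

theorem sum_sum_pos_of_offDiag_pos {α : Type*} [Fintype α] [Nontrivial α] (w : α → α → ℝ)
    (hdiag : ∀ x, w x x = 0) (hpos : ∀ x y, x ≠ y → 0 < w x y) :
    0 < ∑ a, ∑ b, w a b := by
  have hnonneg : ∀ a b, 0 ≤ w a b := fun a b => by
    rcases eq_or_ne a b with rfl | hab
    · exact (hdiag a).ge
    · exact (hpos a b hab).le
  obtain ⟨a, b, hab⟩ := exists_pair_ne α
  refine sum_pos' (fun a _ => sum_nonneg fun b _ => hnonneg a b) ⟨a, mem_univ a, ?_⟩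
  exact sum_pos' (fun b _ => hnonneg a b) ⟨b, mem_univ b, hpos a b hab⟩

section Copies

variable {n c : ℕ}

abbrev copyVertices (n : ℕ) (i : Fin c) : Finset (Fin c × Fin n) := {i} ×ˢ univ

theorem copyVertices_injective [NeZero n] : Function.Injective (copyVertices (c := c) n) :=
  fun i j h => by
    simpa [eq_comm] using (Finset.ext_iff.mp h (i, 0)).mp (by simp)

theorem pairwiseDisjoint_copyVertices :
    ((univ.image (copyVertices (c := c) n) : Finset _) :
      Set (Finset (Fin c × Fin n))).PairwiseDisjoint id := by
  rintro _ hs _ ht hne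
  obtain ⟨i, -, rfl⟩ := mem_image.mp (mem_coe.mp hs)
  obtain ⟨j, -, rfl⟩ := mem_image.mp (mem_coe.mp ht)
  exact disjoint_product.mpr (Or.inl (disjoint_singleton.mpr fun h => hne (h ▸ rfl)))

theorem sup_image_copyVertices : (univ.image (copyVertices (c := c) n)).sup id = univ := by
  ext x
  simp only [sup_image, Function.id_comp, mem_sup, mem_univ, mem_product, mem_singleton,
    true_and, iff_true]
  exact ⟨x.1, rfl, trivial⟩

def copiesPartition (c n : ℕ) : Finpartition (univ : Finset (Fin c × Fin n)) :=
  (Finpartition.ofPairwiseDisjoint _ pairwiseDisjoint_copyVertices).copy sup_image_copyVertices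

variable (w : Fin n → Fin n → ℝ)

theorem sum_copyVertices_sum_copyVertices_copiesW (i : Fin c) :
    ∑ x ∈ copyVertices n i, ∑ y ∈ copyVertices n i, copiesW n c w x y =
      ∑ a, ∑ b, w a b := by
  simp [copiesW]

theorem sum_copyVertices_sum_copiesW (i : Fin c) :
    ∑ x ∈ copyVertices n i, ∑ y, copiesW n c w x y = ∑ a, ∑ b, w a b := by
  simp [Fintype.sum_prod_type, copiesW]

theorem sum_sum_copiesW : ∑ x, ∑ y, copiesW n c w x y = c * ∑ a, ∑ b, w a b := by
  simp [Fintype.sum_prod_type, copiesW]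

theorem modQ_copiesPartition [NeZero n] (hc : c ≠ 0) (hw : ∑ a, ∑ b, w a b ≠ 0) :
    modQ n c w (copiesPartition c n) = 1 - 1 / c := by
  have hc' : (c : ℝ) ≠ 0 := Nat.cast_ne_zero.mpr hc
  rw [modQ, copiesPartition, Finpartition.copy_parts,
    Finpartition.sum_ofPairwiseDisjoint_eq_sum _ (by simp),
    sum_image copyVertices_injective.injOn]
  simp only [sum_copyVertices_sum_copyVertices_copiesW, sum_copyVertices_sum_copiesW,
    sum_sum_copiesW, sum_const, card_univ, Fintype.card_fin, nsmul_eq_mul]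
  field_simp

theorem modQ_le_sSup (δ : Finpartition (univ : Finset (Fin c × Fin n))) :
    modQ n c w δ ≤ sSup {q : ℝ | ∃ δ : Finpartition (univ : Finset (Fin c × Fin n)),
      q = modQ n c w δ} := by
  refine le_csSup ((Set.finite_range (modQ n c w)).subset ?_).bddAbove ⟨δ, rfl⟩
  rintro q ⟨δ', rfl⟩
  exact ⟨δ', rfl⟩

end Copies

theorem one_div_natCeil_one_div_le {ε : ℝ} (hε : 0 < ε) : 1 / (⌈1 / ε⌉₊ : ℝ) ≤ ε :=
  (one_div_le (Nat.cast_pos.mpr (Nat.ceil_pos.mpr (by positivity))) hε).mpr (Nat.le_ceil _)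

theorem stmt_19_general (ε : ℝ) (hε : 0 < ε) (n : ℕ) (hn : 2 ≤ n)
    (w : Fin n → Fin n → ℝ)
    (hdiag : ∀ x, w x x = 0) (hpos : ∀ x y, x ≠ y → 0 < w x y) :
    1 - ε ≤
      sSup {q : ℝ |
        ∃ δ : Finpartition (Finset.univ : Finset (Fin (⌈1 / ε⌉₊) × Fin n)),
          q = modQ n (⌈1 / ε⌉₊) w δ} := by
  have : Nontrivial (Fin n) := Fin.nontrivial_iff_two_le.mpr hn
  have : NeZero n := ⟨by omega⟩
  have hc : ⌈1 / ε⌉₊ ≠ 0 := (Nat.ceil_pos.mpr (by positivity)).ne'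
  have hw := (sum_sum_pos_of_offDiag_pos w hdiag hpos).ne'
  calc 1 - ε ≤ 1 - 1 / (⌈1 / ε⌉₊ : ℝ) := by linarith [one_div_natCeil_one_div_le hε]
    _ = modQ n ⌈1 / ε⌉₊ w (copiesPartition _ n) := (modQ_copiesPartition w hc hw).symm
    _ ≤ _ := modQ_le_sSup w _

/-- For every `ε > 0`, the constant `c = ⌈1/ε⌉` witnesses that modularity is a
polynomial clique metric: for all `n ≥ 2` and any positive (symmetric) edge weights
on `K_n`, the modularity (max over partitions) of `⌈1/ε⌉` disjoint identical copies
of the weighted `K_n` is at least `1 − ε`. -/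
theorem stmt_19 (ε : ℝ) (hε : 0 < ε) (n : ℕ) (hn : 2 ≤ n)
    (w : Fin n → Fin n → ℝ) (hsymm : ∀ x y, w x y = w y x)
    (hdiag : ∀ x, w x x = 0) (hpos : ∀ x y, x ≠ y → 0 < w x y) :
    1 - ε ≤
      sSup {q : ℝ |
        ∃ δ : Finpartition (Finset.univ : Finset (Fin (⌈1 / ε⌉₊) × Fin n)),
          q = modQ n (⌈1 / ε⌉₊) w δ} :=
  stmt_19_general ε hε n hn w hdiag hpos
end
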